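/- arXiv:2510.18402 — 2 statements merged into one kernel-verified Lean document; each statement's English description precedes it below -/
import Mathlib

section
/- Suppose the controllability assumption holds. Along the MPC closed loop, denote by (u*_k, x*_k, s*_k) an optimal feasible tuple at x_k with artificial steady state x_{s_k}* = g_p(s*_k). If the sequence ‖x_k − x_{s_k}*‖ converges to 0 as k → ∞, then V_N(x_k) − V_o(1 − s*_k) → 0 as k → ∞. -/
open Filter Topology

noncomputable section

/-- A class-`K` function: continuous on `[0,∞)`, strictly increasing there, vanishing at `0`. -/
def IsClassK (α : ℝ → ℝ) : Prop :=
  ContinuousOn α (Set.Ici 0) ∧ StrictMonoOn α (Set.Ici 0) ∧ α 0 = 0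

/-- A class-`K∞` function: class `K` and unbounded. -/
def IsClassKInfty (α : ℝ → ℝ) : Prop :=
  IsClassK α ∧ Filter.Tendsto α Filter.atTop Filter.atTop

/-- The data of the output-tracking MPC problem for motion planning:
dynamics `f`, constraint set `Z`, `No` obstacles `O i`, footprint `B`,
reference path `p`, output map `g`, steady-state path `gp` with steady inputs `us`,
stage cost `sc` (called `ℓ` in the paper), offset cost `Vo`, and horizon `N`. -/
structure MPC (n m q : ℕ) where
  f : EuclideanSpace ℝ (Fin n) → EuclideanSpace ℝ (Fin m) → EuclideanSpace ℝ (Fin n)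
  Z : Set (EuclideanSpace ℝ (Fin n) × EuclideanSpace ℝ (Fin m))
  No : ℕ
  O : ℕ → Set (EuclideanSpace ℝ (Fin 2))
  B : EuclideanSpace ℝ (Fin n) → Set (EuclideanSpace ℝ (Fin 2))
  p : ℝ → EuclideanSpace ℝ (Fin q)
  g : EuclideanSpace ℝ (Fin n) → EuclideanSpace ℝ (Fin q)
  gp : ℝ → EuclideanSpace ℝ (Fin n)
  us : ℝ → EuclideanSpace ℝ (Fin m)
  sc : EuclideanSpace ℝ (Fin n) → EuclideanSpace ℝ (Fin m) → ℝ
  Vo : ℝ → ℝ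
  N : ℕ

namespace MPC

variable {n m q : ℕ} (M : MPC n m q)

/-- A tuple `(u_{0:N}, x_{0:N}, s)` is feasible at state `x` for problem (7):
`x_{0|k} = x`, the dynamics hold along the prediction, the terminal pair is a steady
state whose output lies on the path at `s ∈ [0,1]`, the state/input constraints hold, and
the predicted states `l = 1,…,N` are collision-free. -/
def Feasible (x : EuclideanSpace ℝ (Fin n)) (u : ℕ → EuclideanSpace ℝ (Fin m))
    (xs : ℕ → EuclideanSpace ℝ (Fin n)) (s : ℝ) : Prop :=
  s ∈ Set.Icc (0 : ℝ) 1 ∧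
  xs 0 = x ∧
  (∀ l < M.N, xs (l + 1) = M.f (xs l) (u l)) ∧
  xs M.N = M.f (xs M.N) (u M.N) ∧
  M.g (xs M.N) = M.p s ∧
  (∀ l ≤ M.N, (xs l, u l) ∈ M.Z) ∧
  (∀ l, 1 ≤ l → l ≤ M.N → ∀ i < M.No, M.B (xs l) ∩ M.O i = ∅)

/-- The MPC cost `J_N(u, x, s) = Σ_{l=0}^{N-1} ℓ(x_l − x_N, u_l − u_N) + V_o(1 − s)`. -/
def Cost (u : ℕ → EuclideanSpace ℝ (Fin m)) (xs : ℕ → EuclideanSpace ℝ (Fin n)) (s : ℝ) : ℝ :=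
  (∑ l ∈ Finset.range M.N, M.sc (xs l - xs M.N) (u l - u M.N)) + M.Vo (1 - s)

/-- `(u, xs, s)` is an optimal feasible tuple at `x`; its cost is the optimal value `V_N(x)`. -/
def IsOptimal (x : EuclideanSpace ℝ (Fin n)) (u : ℕ → EuclideanSpace ℝ (Fin m))
    (xs : ℕ → EuclideanSpace ℝ (Fin n)) (s : ℝ) : Prop :=
  M.Feasible x u xs s ∧
  ∀ u' xs' s', M.Feasible x u' xs' s' → M.Cost u xs s ≤ M.Cost u' xs' s'

/-- Assumption 1 items 2–4 on the path and steady states: `g ∘ gp = p` on `[0,1]`, each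
`(gp s, us s)` is a steady state in the interior of `Z` whose footprint avoids all
obstacles, and it is the unique steady state with output `p s`. -/
def SteadyStatePath : Prop :=
  (∀ s ∈ Set.Icc (0 : ℝ) 1, M.g (M.gp s) = M.p s) ∧
  (∀ s ∈ Set.Icc (0 : ℝ) 1, M.f (M.gp s) (M.us s) = M.gp s) ∧
  (∀ s ∈ Set.Icc (0 : ℝ) 1, (M.gp s, M.us s) ∈ interior M.Z) ∧
  (∀ s ∈ Set.Icc (0 : ℝ) 1, ∀ i < M.No, M.B (M.gp s) ∩ M.O i = ∅) ∧
  (∀ s ∈ Set.Icc (0 : ℝ) 1, ∀ xss uss, M.f xss uss = xss → M.g xss = M.p s →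
      xss = M.gp s ∧ uss = M.us s)

/-- Assumption 3 (controllability): from any state `ε`-close to a steady state on the path
there is a feasible tuple whose tracking cost is bounded by `b‖x − gp s‖^σ`. -/
def Controllable (b ε σ : ℝ) : Prop :=
  ∀ s ∈ Set.Icc (0 : ℝ) 1, ∀ x : EuclideanSpace ℝ (Fin n), ‖x - M.gp s‖ ≤ ε →
    ∃ u xs, M.Feasible x u xs s ∧
      (∑ l ∈ Finset.range M.N, M.sc (xs l - M.gp s) (u l - M.us s)) ≤ b * ‖x - M.gp s‖ ^ σ

end MPC

/-!
`V_N(x_k) − V_o(1 − s*_k)` is the tracking part of the optimal cost, hence nonnegative. For the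
upper bound, compare with the controllability witness at the same `s*_k`: its terminal pair is a
steady state with output `p(s*_k)`, so by uniqueness it is `(g_p(s*_k), u_{s*_k})`; its offset cost
therefore equals that of the optimum and its tracking cost is at most `b‖x_k − g_p(s*_k)‖^σ`.
-/

theorem tendsto_zero_of_nonneg_of_le_mul_rpow {α : Type*} {l : Filter α} {a d : α → ℝ}
    {b ε σ : ℝ} (hε : 0 < ε) (hσ : 0 < σ) (ha : ∀ k, 0 ≤ a k)
    (hle : ∀ k, d k ≤ ε → a k ≤ b * d k ^ σ) (hd : Tendsto d l (𝓝 0)) :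
    Tendsto a l (𝓝 0) := by
  have hbound : Tendsto (fun k => b * d k ^ σ) l (𝓝 0) := by
    simpa using (hd.rpow_const_nhds_zero hσ).const_mul b
  have hsmall : ∀ᶠ k in l, d k ≤ ε :=
    (hd.eventually (eventually_lt_nhds hε)).mono fun _ => le_of_lt
  exact tendsto_of_tendsto_of_tendsto_of_le_of_le' tendsto_const_nhds hbound
    (Eventually.of_forall ha) (hsmall.mono hle)

namespace MPC

variable {n m q : ℕ} (M : MPC n m q)

theorem cost_sub_offset_nonneg (hsc : ∀ x u, 0 ≤ M.sc x u)
    (u : ℕ → EuclideanSpace ℝ (Fin m)) (xs : ℕ → EuclideanSpace ℝ (Fin n)) (s : ℝ) :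
    0 ≤ M.Cost u xs s - M.Vo (1 - s) := by
  simpa [Cost] using Finset.sum_nonneg fun l _ => hsc (xs l - xs M.N) (u l - u M.N)

variable {M}

theorem Feasible.terminal_eq (hpath : M.SteadyStatePath) {x : EuclideanSpace ℝ (Fin n)}
    {u : ℕ → EuclideanSpace ℝ (Fin m)} {xs : ℕ → EuclideanSpace ℝ (Fin n)} {s : ℝ}
    (h : M.Feasible x u xs s) : xs M.N = M.gp s ∧ u M.N = M.us s :=
  hpath.2.2.2.2 s h.1 (xs M.N) (u M.N) h.2.2.2.1.symm h.2.2.2.2.1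

theorem IsOptimal.cost_sub_offset_le (hpath : M.SteadyStatePath) {b ε σ : ℝ}
    (hctrl : M.Controllable b ε σ) {x : EuclideanSpace ℝ (Fin n)}
    {u : ℕ → EuclideanSpace ℝ (Fin m)} {xs : ℕ → EuclideanSpace ℝ (Fin n)} {s : ℝ}
    (hopt : M.IsOptimal x u xs s) (hx : ‖x - M.gp s‖ ≤ ε) :
    M.Cost u xs s - M.Vo (1 - s) ≤ b * ‖x - M.gp s‖ ^ σ := by
  obtain ⟨u', xs', hfeas, htrack⟩ := hctrl s hopt.1.1 x hx
  obtain ⟨hxN, huN⟩ := hfeas.terminal_eq hpath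
  have hcost : M.Cost u' xs' s ≤ b * ‖x - M.gp s‖ ^ σ + M.Vo (1 - s) := by
    simp only [Cost, hxN, huN]
    linarith
  linarith [hopt.2 u' xs' s hfeas]

end MPC

theorem mpc_lemma1_value_converges_to_offset_general
    {n m q : ℕ} (M : MPC n m q)
    (hpath : M.SteadyStatePath)
    (hscNonneg : ∀ x u, 0 ≤ M.sc x u)
    (b ε σ : ℝ) (hε : 0 < ε) (hσ : 1 < σ)
    (hctrl : M.Controllable b ε σ)
    (x : ℕ → EuclideanSpace ℝ (Fin n))
    (uu : ℕ → ℕ → EuclideanSpace ℝ (Fin m))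
    (xx : ℕ → ℕ → EuclideanSpace ℝ (Fin n)) (ss : ℕ → ℝ)
    (hopt : ∀ k, M.IsOptimal (x k) (uu k) (xx k) (ss k))
    (hconv : Filter.Tendsto (fun k => ‖x k - M.gp (ss k)‖) Filter.atTop (nhds 0)) :
    Filter.Tendsto (fun k => M.Cost (uu k) (xx k) (ss k) - M.Vo (1 - ss k))
      Filter.atTop (nhds 0) :=
  tendsto_zero_of_nonneg_of_le_mul_rpow hε (zero_lt_one.trans hσ)
    (fun k => M.cost_sub_offset_nonneg hscNonneg (uu k) (xx k) (ss k))
    (fun k => (hopt k).cost_sub_offset_le hpath hctrl) hconv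

/-- **Lemma 1.** Suppose the controllability assumption holds. Along the MPC closed loop
`x (k+1) = f (x k) (u*_{0|k})` with optimal feasible tuples `(u* k, x* k, s* k)` at `x k`
and artificial steady state `x_{s_k}* = gp (s* k)`: if `‖x k − gp (s* k)‖ → 0`, then
`V_N (x k) − V_o (1 − s* k) → 0`. -/
theorem mpc_lemma1_value_converges_to_offset
    {n m q : ℕ} (M : MPC n m q)
    (hpath : M.SteadyStatePath)
    (hscNonneg : ∀ x u, 0 ≤ M.sc x u)
    (b ε σ : ℝ) (hb : 0 < b) (hε : 0 < ε) (hσ : 1 < σ)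
    (hctrl : M.Controllable b ε σ)
    (x : ℕ → EuclideanSpace ℝ (Fin n))
    (uu : ℕ → ℕ → EuclideanSpace ℝ (Fin m))
    (xx : ℕ → ℕ → EuclideanSpace ℝ (Fin n)) (ss : ℕ → ℝ)
    (hopt : ∀ k, M.IsOptimal (x k) (uu k) (xx k) (ss k))
    (hstep : ∀ k, x (k + 1) = M.f (x k) (uu k 0))
    (hconv : Filter.Tendsto (fun k => ‖x k - M.gp (ss k)‖) Filter.atTop (nhds 0)) :
    Filter.Tendsto (fun k => M.Cost (uu k) (xx k) (ss k) - M.Vo (1 - ss k))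
      Filter.atTop (nhds 0) :=
  mpc_lemma1_value_converges_to_offset_general M hpath hscNonneg b ε σ hε hσ hctrl x uu xx ss hopt
    hconv
end
end

section
/- (Decrease of the optimal value function along the closed loop.) Suppose α_ℓ(‖x‖) ≤ ℓ(x,u) for a class-K∞ function α_ℓ. Along the MPC closed loop x_{k+1} = f(x_k, u*_{0|k}), where (u*_k, x*_k, s*_k) is an optimal feasible tuple at x_k with artificial steady state x_{s_k}* = x*_{N|k} and input u_{s_k}* = u*_{N|k}, it holds that V_N(x_{k+1}) − V_N(x_k) ≤ −ℓ(x_k − x_{s_k}*, u*_{0|k} − u_{s_k}*) ≤ −α_ℓ(‖x_k − x_{s_k}*‖) ≤ 0. -/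
open Filter Topology

noncomputable section

/-!
The shifted optimal input and state sequences, with the artificial steady state repeated at the
end, are feasible at the successor state and have the same offset cost; dropping the first stage
removes exactly `ℓ(x − x_s*, u 0 − u_s*)` from the tracking cost, since the appended stage costs
`ℓ(0, 0) = 0`. Optimality at the successor then gives the decrease.
-/

theorem IsClassK.nonneg {α : ℝ → ℝ} (hα : IsClassK α) {r : ℝ} (hr : 0 ≤ r) : 0 ≤ α r := by
  simpa [hα.2.2] using hα.2.1.monotoneOn Set.self_mem_Ici (Set.mem_Ici.mpr hr) hr

namespace MPC

variable {n m q : ℕ} (M : MPC n m q)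

def shift {α : Type*} (v : ℕ → α) : ℕ → α := fun l => v (min (l + 1) M.N)

variable {M}

theorem shift_of_lt {α : Type*} (v : ℕ → α) {l : ℕ} (hl : l < M.N) : M.shift v l = v (l + 1) := by
  simp [shift, Nat.min_eq_left (Nat.succ_le_of_lt hl)]

theorem shift_of_le {α : Type*} (v : ℕ → α) {l : ℕ} (hl : M.N ≤ l) : M.shift v l = v M.N := by
  simp [shift, Nat.min_eq_right (Nat.le_succ_of_le hl)]

@[simp]
theorem shift_self {α : Type*} (v : ℕ → α) : M.shift v M.N = v M.N := shift_of_le v le_rfl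

theorem Feasible.shift_zero_eq {x : EuclideanSpace ℝ (Fin n)} {u : ℕ → EuclideanSpace ℝ (Fin m)}
    {xs : ℕ → EuclideanSpace ℝ (Fin n)} {s : ℝ} (h : M.Feasible x u xs s) :
    M.shift xs 0 = M.f x (u 0) := by
  obtain ⟨-, hx0, hdyn, hterm, -⟩ := h
  rcases Nat.eq_zero_or_pos M.N with hN | hN
  · rw [shift_of_le xs hN.le, ← hx0, hN]
    exact hN ▸ hterm
  · rw [shift_of_lt xs hN, hdyn 0 hN, hx0]

theorem Feasible.shift {x : EuclideanSpace ℝ (Fin n)} {u : ℕ → EuclideanSpace ℝ (Fin m)}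
    {xs : ℕ → EuclideanSpace ℝ (Fin n)} {s : ℝ} (h : M.Feasible x u xs s) :
    M.Feasible (M.f x (u 0)) (M.shift u) (M.shift xs) s := by
  have hx0 := h.shift_zero_eq
  obtain ⟨hs, -, hdyn, hterm, hout, hZ, hobs⟩ := h
  refine ⟨hs, hx0, fun l hl => ?_, by simpa using hterm, by simpa using hout,
    fun l hl => ?_, fun l hl1 hl2 i hi => ?_⟩
  · rw [shift_of_lt xs hl, shift_of_lt u hl]
    rcases Nat.lt_or_ge (l + 1) M.N with hl' | hl'
    · rw [shift_of_lt xs hl']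
      exact hdyn (l + 1) hl'
    · rw [shift_of_le xs hl', show l + 1 = M.N by omega]
      exact hterm
  · exact hZ _ (min_le_right _ _)
  · exact hobs _ (by omega) (min_le_right _ _) i hi

theorem cost_shift_add (hsc0 : M.sc 0 0 = 0) (u : ℕ → EuclideanSpace ℝ (Fin m))
    (xs : ℕ → EuclideanSpace ℝ (Fin n)) (s : ℝ) :
    M.Cost (M.shift u) (M.shift xs) s + M.sc (xs 0 - xs M.N) (u 0 - u M.N) = M.Cost u xs s := by
  set c : ℕ → ℝ := fun l => M.sc (xs l - xs M.N) (u l - u M.N)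
  have hshift : ∑ l ∈ Finset.range M.N,
      M.sc (M.shift xs l - M.shift xs M.N) (M.shift u l - M.shift u M.N) =
      ∑ l ∈ Finset.range M.N, c (l + 1) := by
    refine Finset.sum_congr rfl fun l hl => ?_
    rw [shift_of_lt xs (Finset.mem_range.mp hl), shift_of_lt u (Finset.mem_range.mp hl),
      shift_self, shift_self]
  have htelescope : ∑ l ∈ Finset.range M.N, c (l + 1) + c 0 = ∑ l ∈ Finset.range M.N, c l := by
    have hcN : c M.N = 0 := by simpa [c] using hsc0
    rw [← Finset.sum_range_succ', Finset.sum_range_succ, hcN, add_zero]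
  simp only [Cost, hshift]
  linarith

end MPC

theorem mpc_value_function_decrease_general
    {n m q : ℕ} (M : MPC n m q)
    (hsc0 : M.sc 0 0 = 0)
    (αℓ : ℝ → ℝ) (hαℓ : IsClassKInfty αℓ)
    (hsclb : ∀ x u, αℓ ‖x‖ ≤ M.sc x u)
    (x : EuclideanSpace ℝ (Fin n))
    (u : ℕ → EuclideanSpace ℝ (Fin m)) (xs : ℕ → EuclideanSpace ℝ (Fin n)) (s : ℝ)
    (hopt : M.IsOptimal x u xs s)
    (u' : ℕ → EuclideanSpace ℝ (Fin m)) (xs' : ℕ → EuclideanSpace ℝ (Fin n)) (s' : ℝ)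
    (hopt' : M.IsOptimal (M.f x (u 0)) u' xs' s') :
    M.Cost u' xs' s' - M.Cost u xs s ≤ -(M.sc (x - xs M.N) (u 0 - u M.N)) ∧
    -(M.sc (x - xs M.N) (u 0 - u M.N)) ≤ -(αℓ ‖x - xs M.N‖) ∧
    -(αℓ ‖x - xs M.N‖) ≤ 0 := by
  have hcandidate : M.Cost u' xs' s' ≤ M.Cost (M.shift u) (M.shift xs) s :=
    hopt'.2 _ _ _ hopt.1.shift
  have hdrop := MPC.cost_shift_add hsc0 u xs s
  rw [hopt.1.2.1] at hdrop
  have hlb := hsclb (x - xs M.N) (u 0 - u M.N)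
  have hα := hαℓ.1.nonneg (norm_nonneg (x - xs M.N))
  exact ⟨by linarith, by linarith, by linarith⟩

/-- **Decrease of the optimal value function along the closed loop (eq. (16)).**
With a positive-definite stage cost bounded below by a class-`K∞` function `α_ℓ`,
if `(u, xs, s)` is an optimal feasible tuple at `x` (so `V_N x = J_N(u, xs, s)`,
with artificial steady state `x_s* = xs N` and input `u_s* = u N`) and
`(u', xs', s')` is an optimal feasible tuple at the successor `x⁺ = f x (u 0)`
(so `V_N x⁺ = J_N(u', xs', s')`), then
`V_N x⁺ − V_N x ≤ −ℓ(x − x_s*, u 0 − u_s*) ≤ −α_ℓ(‖x − x_s*‖) ≤ 0`. -/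
theorem mpc_value_function_decrease
    {n m q : ℕ} (M : MPC n m q) (hN : 0 < M.N)
    (hscNonneg : ∀ x u, 0 ≤ M.sc x u) (hsc0 : M.sc 0 0 = 0)
    (αℓ : ℝ → ℝ) (hαℓ : IsClassKInfty αℓ)
    (hsclb : ∀ x u, αℓ ‖x‖ ≤ M.sc x u)
    (x : EuclideanSpace ℝ (Fin n))
    (u : ℕ → EuclideanSpace ℝ (Fin m)) (xs : ℕ → EuclideanSpace ℝ (Fin n)) (s : ℝ)
    (hopt : M.IsOptimal x u xs s)
    (u' : ℕ → EuclideanSpace ℝ (Fin m)) (xs' : ℕ → EuclideanSpace ℝ (Fin n)) (s' : ℝ)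
    (hopt' : M.IsOptimal (M.f x (u 0)) u' xs' s') :
    M.Cost u' xs' s' - M.Cost u xs s ≤ -(M.sc (x - xs M.N) (u 0 - u M.N)) ∧
    -(M.sc (x - xs M.N) (u 0 - u M.N)) ≤ -(αℓ ‖x - xs M.N‖) ∧
    -(αℓ ‖x - xs M.N‖) ≤ 0 :=
  mpc_value_function_decrease_general M hsc0 αℓ hαℓ hsclb x u xs s hopt u' xs' s' hopt'
end
end
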